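/- The set D₁ \ C₁ = { (x,y) ∈ ℝ² : x ≤ (1/4)y²·sgn(y) } \ { (x,y) : x = (1/4)y², y ≥ 0 } is forward invariant under the flow of the vector field g(x,y) = (y, 1): if (x₀,y₀) ∈ D₁ \ C₁ and φ(t) = (x₀ + y₀t + t²/2, y₀ + t), then there exists δ > 0 such that φ(t) ∈ D₁ \ C₁ for all t ∈ [0, δ). -/
import Mathlib


/-- `D₁ = {(x,y) : x ≤ (1/4)y² sgn y}`. -/
def fullerD1 : Set (ℝ × ℝ) := {p | p.1 ≤ (1 / 4) * p.2 ^ 2 * Real.sign p.2}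

/-- `C₁ = {(x,y) : x = (1/4)y², y ≥ 0}`. -/
def fullerC1 : Set (ℝ × ℝ) := {p | p.1 = (1 / 4) * p.2 ^ 2 ∧ 0 ≤ p.2}

/-- `D₁ \ C₁` is forward invariant under the flow of `(y,1)`. -/
theorem fullerD1_diff_C1_forward_invariant (x₀ y₀ : ℝ)
    (h : (x₀, y₀) ∈ fullerD1 \ fullerC1) :
    ∃ δ > 0, ∀ t ∈ Set.Ico (0:ℝ) δ,
      (x₀ + y₀ * t + t ^ 2 / 2, y₀ + t) ∈ fullerD1 \ fullerC1 := by
  obtain ⟨hD, hC⟩ := h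
  simp only [fullerD1, fullerC1, Set.mem_setOf_eq] at hD hC
  rcases lt_trichotomy y₀ 0 with hy | hy | hy
  · -- y₀ < 0
    have hD' : x₀ ≤ -(1 / 4) * y₀ ^ 2 := by
      rw [Real.sign_of_neg hy] at hD; linarith
    refine ⟨-y₀, by linarith, fun t ht => ?_⟩
    obtain ⟨ht0, htδ⟩ := ht
    have hyt : y₀ + t < 0 := by linarith
    constructor
    · show _ ∈ {p : ℝ × ℝ | p.1 ≤ (1 / 4) * p.2 ^ 2 * Real.sign p.2}
      simp only [Set.mem_setOf_eq]
      rw [Real.sign_of_neg hyt]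
      nlinarith
    · rintro ⟨_, h2⟩
      simp only at h2
      linarith
  · -- y₀ = 0
    subst hy
    rw [Real.sign_zero] at hD
    have hx : x₀ < 0 := by
      rcases lt_or_eq_of_le (by linarith : x₀ ≤ 0) with h' | h'
      · exact h'
      · exact absurd ⟨by simp [h'], le_refl 0⟩ hC
    refine ⟨min 1 (-x₀), lt_min one_pos (by linarith), fun t ht => ?_⟩
    obtain ⟨ht0, htδ⟩ := ht
    have ht1 : t < 1 := lt_of_lt_of_le htδ (min_le_left _ _)
    have ht2 : t < -x₀ := lt_of_lt_of_le htδ (min_le_right _ _)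
    rcases eq_or_lt_of_le ht0 with h0 | h0
    · constructor
      · show _ ∈ {p : ℝ × ℝ | p.1 ≤ (1 / 4) * p.2 ^ 2 * Real.sign p.2}
        simp only [Set.mem_setOf_eq]
        simp only [← h0]
        simpa using hD
      · rintro ⟨h1, _⟩
        simp only [← h0] at h1
        norm_num at h1
        linarith
    · have hs : Real.sign (0 + t) = 1 := Real.sign_of_pos (by linarith)
      have key : x₀ + 0 * t + t ^ 2 / 2 < (1 / 4) * (0 + t) ^ 2 := by
        nlinarith
      constructor
      · show _ ∈ {p : ℝ × ℝ | p.1 ≤ (1 / 4) * p.2 ^ 2 * Real.sign p.2}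
        simp only [Set.mem_setOf_eq]
        rw [hs]; linarith
      · rintro ⟨h1, _⟩
        simp only at h1
        linarith
  · -- y₀ > 0
    rw [Real.sign_of_pos hy] at hD
    have hx : x₀ < 1 / 4 * y₀ ^ 2 := by
      rcases lt_or_eq_of_le (by linarith : x₀ ≤ 1 / 4 * y₀ ^ 2) with h' | h'
      · exact h'
      · exact absurd ⟨h', le_of_lt hy⟩ hC
    have hε : 0 < (1 / 4 * y₀ ^ 2 - x₀) / (y₀ + 1) := div_pos (by linarith) (by linarith)
    refine ⟨min y₀ ((1 / 4 * y₀ ^ 2 - x₀) / (y₀ + 1)), lt_min hy hε, fun t ht => ?_⟩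
    obtain ⟨ht0, htδ⟩ := ht
    have ht1 : t < y₀ := lt_of_lt_of_le htδ (min_le_left _ _)
    have ht2 : t * (y₀ + 1) < 1 / 4 * y₀ ^ 2 - x₀ := by
      have := lt_of_lt_of_le htδ (min_le_right _ _)
      have hy1 : 0 < y₀ + 1 := by linarith
      calc t * (y₀ + 1) < ((1 / 4 * y₀ ^ 2 - x₀) / (y₀ + 1)) * (y₀ + 1) := by
            exact mul_lt_mul_of_pos_right this hy1
        _ = 1 / 4 * y₀ ^ 2 - x₀ := div_mul_cancel₀ _ (ne_of_gt hy1)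
    have hyt : 0 < y₀ + t := by linarith
    have key : x₀ + y₀ * t + t ^ 2 / 2 < (1 / 4) * (y₀ + t) ^ 2 := by
      nlinarith
    constructor
    · show _ ∈ {p : ℝ × ℝ | p.1 ≤ (1 / 4) * p.2 ^ 2 * Real.sign p.2}
      simp only [Set.mem_setOf_eq]
      rw [Real.sign_of_pos hyt]
      linarith
    · rintro ⟨h1, _⟩
      simp only at h1
      linarith
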